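/- Let T be a Hadamard space and L a finite weighted graph with vertex weights m(y) > 0 and edge weights m(y,y') > 0 satisfying m(y) = Σ_{y'∼y} m(y,y'). Then (1 − δ(T))·μ_1(L) ≤ λ_1(L, T) ≤ μ_1(L), where μ_1(L) is the first nonzero eigenvalue of the weighted graph Laplacian and λ_1(L,T) = inf over nonconstant maps φ : L(0) → T of [½ Σ_{(y,z) edges} m(y,z) d_T(φ(y),φ(z))²] / [Σ_y m(y) d_T(φ̄, φ(y))²], with φ̄ the barycenter of {φ(y)} with weights m(y)/m. In particular, if δ(T) = 0 then λ_1(L,T) = μ_1(L). -/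

import Mathlib

open Filter Metric Set Topology

/-- A Hadamard space: a complete metric space with midpoints satisfying the CN
(comparison) inequality of CAT(0) geometry. -/
class HadamardSpace (Y : Type*) [MetricSpace Y] : Prop where
  complete : CompleteSpace Y
  midpoints : ∀ x y : Y, ∃ m : Y, dist x m = dist x y / 2 ∧ dist m y = dist x y / 2
  cn : ∀ x y z m : Y, dist y m = dist y z / 2 → dist m z = dist y z / 2 →
    dist x m ^ 2 ≤ dist x y ^ 2 / 2 + dist x z ^ 2 / 2 - dist y z ^ 2 / 4

/-- `b` is the barycenter of the points `v` with weights `t`: it minimizes the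
weighted sum of squared distances. -/
def IsWBarycenter {T : Type*} [MetricSpace T] {ι : Type*} [Fintype ι]
    (b : T) (v : ι → T) (t : ι → ℝ) : Prop :=
  ∀ q : T, ∑ i, t i * dist (v i) b ^ 2 ≤ ∑ i, t i * dist (v i) q ^ 2

/-- A Euclidean realization of the configuration `v` with barycenter `b`. -/
def IsRealization {T : Type*} [MetricSpace T] {ι : Type*} {N : ℕ}
    (b : T) (v : ι → T) (w : ι → EuclideanSpace ℝ (Fin N)) : Prop :=
  (∀ i, ‖w i‖ = dist b (v i)) ∧ ∀ i j, ‖w i - w j‖ ≤ dist (v i) (v j)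

/-- The invariant `δ({v_i},{t_i})` of a weighted configuration with barycenter `b`. -/
noncomputable def deltaConfig {T : Type*} [MetricSpace T] {m : ℕ}
    (b : T) (v : Fin m → T) (t : Fin m → ℝ) : ℝ :=
  sInf {r : ℝ | ∃ (N : ℕ) (w : Fin m → EuclideanSpace ℝ (Fin N)),
    IsRealization b v w ∧ r = ‖∑ i, t i • w i‖ ^ 2 / ∑ i, t i * ‖w i‖ ^ 2}

/-- The invariant `δ(T, v)`: supremum of `δ` over configurations of distinct points with
positive weights summing to `1` whose barycenter is `v`. -/
noncomputable def deltaAt (T : Type*) [MetricSpace T] (v : T) : ℝ :=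
  sSup {r : ℝ | ∃ (m : ℕ) (vv : Fin m → T) (t : Fin m → ℝ),
    Function.Injective vv ∧ (∀ i, 0 < t i) ∧ (∑ i, t i = 1) ∧
    IsWBarycenter v vv t ∧ r = deltaConfig v vv t}

/-- The invariant `δ(T)`: supremum of `δ` over all weighted configurations. -/
noncomputable def deltaTotal (T : Type*) [MetricSpace T] : ℝ :=
  sSup {r : ℝ | ∃ (m : ℕ) (vv : Fin m → T) (t : Fin m → ℝ) (b : T),
    Function.Injective vv ∧ (∀ i, 0 < t i) ∧ (∑ i, t i = 1) ∧
    IsWBarycenter b vv t ∧ r = deltaConfig b vv t}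


/-- The first nonzero eigenvalue `μ₁` of the weighted graph Laplacian, via the
Rayleigh quotient over nonconstant real functions.  Here `m1` are the vertex weights
and `m2` the (symmetric) edge weights, with `m2 y y' = 0` for non-edges. -/
noncomputable def mu1Graph {V : Type*} [Fintype V] (m1 : V → ℝ) (m2 : V → V → ℝ) : ℝ :=
  sInf {r : ℝ | ∃ f : V → ℝ, (∃ y y', f y ≠ f y') ∧
    r = ((1 : ℝ) / 2 * ∑ y, ∑ y', m2 y y' * (f y - f y') ^ 2) /
        (∑ y, m1 y * (f y - ∑ y', (m1 y' / ∑ y'', m1 y'') * f y') ^ 2)}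

/-- Wang's invariant `λ₁(L, T)`: infimum of the Rayleigh quotient over nonconstant
maps `φ : L(0) → T`, with `φ̄` the barycenter of `φ` with weights `m1/m`. -/
noncomputable def lambda1Graph {V : Type*} [Fintype V] (m1 : V → ℝ) (m2 : V → V → ℝ)
    (T : Type*) [MetricSpace T] : ℝ :=
  sInf {r : ℝ | ∃ φ : V → T, (∃ y y', φ y ≠ φ y') ∧ ∃ b : T,
    IsWBarycenter b φ (fun y => m1 y / ∑ y', m1 y') ∧
    r = ((1 : ℝ) / 2 * ∑ y, ∑ y', m2 y y' * dist (φ y) (φ y') ^ 2) /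
        (∑ y, m1 y * dist b (φ y) ^ 2)}

/-!
Upper bound: a Hadamard space contains a scaled copy `g` of every real interval (iterated
midpoints and completeness), and by the CN inequality `u ↦ d(q, g u)² - c²u²` is convex, so
Jensen's inequality shows that `g` maps weighted means to barycenters. Composing a nonconstant
`f : L(0) → ℝ` with `g` therefore gives a map to `T` with the same Rayleigh quotient.

Lower bound: after merging the vertices with equal image, a map `φ` with barycenter `b` is a
configuration to which the definition of `δ(T)` applies; so for every `ε > 0` it has a Euclidean
realization `W` with weighted mean `B` satisfying `‖B‖² ≤ (δ(T) + ε) · mean ‖W‖²`. The variance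
`mean ‖W‖² - ‖B‖²` of `W` is then at least `(1 - δ(T) - ε) · mean d(b, φ)²`, and applying the
spectral gap coordinatewise bounds it by the energy of `W`, which is at most that of `φ`.
-/

section DyadicChain

theorem dist_eq_abs_sub_mul_of_dist_succ {X : Type*} [MetricSpace X] {p : ℕ → X} {N : ℕ} {δ : ℝ}
    (hstep : ∀ k < N, dist (p k) (p (k + 1)) = δ) (hend : dist (p 0) (p N) = N * δ)
    {k l : ℕ} (hk : k ≤ N) (hl : l ≤ N) : dist (p k) (p l) = |(k : ℝ) - l| * δ := by
  have dist_le : ∀ u v, u ≤ v → v ≤ N → dist (p u) (p v) ≤ ((v : ℝ) - u) * δ := by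
    intro u v huv hv
    calc dist (p u) (p v) ≤ ∑ i ∈ Finset.Ico u v, dist (p i) (p (i + 1)) :=
          dist_le_Ico_sum_dist p huv
      _ = ((v : ℝ) - u) * δ := by
          rw [Finset.sum_congr rfl fun i hi => hstep i (by grind),
            Finset.sum_const, Nat.card_Ico, nsmul_eq_mul, Nat.cast_sub huv]
  have dist_eq : ∀ u v, u ≤ v → v ≤ N → dist (p u) (p v) = ((v : ℝ) - u) * δ := by
    intro u v huv hv
    refine (dist_le u v huv hv).antisymm ?_
    have h0u := dist_le 0 u (Nat.zero_le u) (huv.trans hv)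
    have hvN := dist_le v N hv le_rfl
    have := dist_triangle4 (p 0) (p u) (p v) (p N)
    push_cast at h0u
    linarith
  rcases le_total k l with hkl | hlk
  · rw [dist_eq k l hkl hl, abs_sub_comm, abs_of_nonneg (sub_nonneg.2 (Nat.cast_le.2 hkl))]
  · rw [dist_comm, dist_eq l k hlk hk, abs_of_nonneg (sub_nonneg.2 (Nat.cast_le.2 hlk))]

/-- The point with parameter `k / 2 ^ n` on a path from `x` to `y` built by iterated midpoints. -/
def dyadicChain {X : Type*} (mid : X → X → X) (x y : X) : ℕ → ℕ → X
  | 0 => fun k => if k = 0 then x else y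
  | n + 1 => fun k =>
      if k % 2 = 0 then dyadicChain mid x y n (k / 2)
      else mid (dyadicChain mid x y n (k / 2)) (dyadicChain mid x y n (k / 2 + 1))

variable {X : Type*} (mid : X → X → X) (x y : X)

theorem dyadicChain_zero_right (n : ℕ) : dyadicChain mid x y n 0 = x := by
  induction n with
  | zero => rfl
  | succ n ih => simp [dyadicChain, ih]

theorem dyadicChain_two_pow (n : ℕ) : dyadicChain mid x y n (2 ^ n) = y := by
  induction n with
  | zero => rfl
  | succ n ih => simp [dyadicChain, pow_succ, ih]

theorem dyadicChain_two_mul (n k : ℕ) :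
    dyadicChain mid x y (n + 1) (2 * k) = dyadicChain mid x y n k := by
  simp [dyadicChain]

theorem dyadicChain_two_mul_add_one (n k : ℕ) :
    dyadicChain mid x y (n + 1) (2 * k + 1) =
      mid (dyadicChain mid x y n k) (dyadicChain mid x y n (k + 1)) := by
  simp [dyadicChain, Nat.add_mod, Nat.add_div]

theorem dyadicChain_add_two_pow_mul (n j k : ℕ) :
    dyadicChain mid x y (n + j) (2 ^ j * k) = dyadicChain mid x y n k := by
  induction j generalizing k with
  | zero => simp
  | succ j ih => rw [← add_assoc, pow_succ', mul_assoc, dyadicChain_two_mul, ih]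

variable [MetricSpace X] {mid}

theorem dist_dyadicChain_succ
    (hmid : ∀ a b, dist a (mid a b) = dist a b / 2 ∧ dist (mid a b) b = dist a b / 2)
    (n k : ℕ) (hk : k < 2 ^ n) :
    dist (dyadicChain mid x y n k) (dyadicChain mid x y n (k + 1)) = dist x y / 2 ^ n := by
  induction n generalizing k with
  | zero =>
    obtain rfl : k = 0 := by simpa using hk
    simp [dyadicChain]
  | succ n ih =>
    obtain ⟨j, rfl | rfl⟩ := Nat.even_or_odd' k
    · rw [dyadicChain_two_mul_add_one, dyadicChain_two_mul, (hmid _ _).1, ih j (by grind)]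
      ring
    · rw [show 2 * j + 1 + 1 = 2 * (j + 1) by ring, dyadicChain_two_mul_add_one,
        dyadicChain_two_mul, (hmid _ _).2, ih j (by grind)]
      ring

theorem dist_dyadicChain_same_level
    (hmid : ∀ a b, dist a (mid a b) = dist a b / 2 ∧ dist (mid a b) b = dist a b / 2)
    {n k l : ℕ} (hk : k ≤ 2 ^ n) (hl : l ≤ 2 ^ n) :
    dist (dyadicChain mid x y n k) (dyadicChain mid x y n l) =
      |(k : ℝ) - l| * (dist x y / 2 ^ n) :=
  dist_eq_abs_sub_mul_of_dist_succ (p := dyadicChain mid x y n)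
    (dist_dyadicChain_succ x y hmid n)
    (by rw [dyadicChain_zero_right, dyadicChain_two_pow]; push_cast; field_simp) hk hl

theorem dist_dyadicChain
    (hmid : ∀ a b, dist a (mid a b) = dist a b / 2 ∧ dist (mid a b) b = dist a b / 2)
    {n n' k k' : ℕ} (hk : k ≤ 2 ^ n) (hk' : k' ≤ 2 ^ n') :
    dist (dyadicChain mid x y n k) (dyadicChain mid x y n' k') =
      dist x y * |(k : ℝ) / 2 ^ n - k' / 2 ^ n'| := by
  rw [← dyadicChain_add_two_pow_mul mid x y n n' k, ← dyadicChain_add_two_pow_mul mid x y n' n k',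
    add_comm n' n, dist_dyadicChain_same_level x y hmid]
  · have hq : (k : ℝ) / 2 ^ n - k' / 2 ^ n' = (2 ^ n' * k - 2 ^ n * k') / (2 ^ n * 2 ^ n') := by
      field_simp
    push_cast
    rw [hq, abs_div, abs_of_pos (by positivity : (0 : ℝ) < 2 ^ n * 2 ^ n'), pow_add]
    ring
  · rw [pow_add, mul_comm (2 ^ n)]; exact Nat.mul_le_mul_left _ hk
  · rw [pow_add]; exact Nat.mul_le_mul_left _ hk'

end DyadicChain

theorem abs_floor_mul_two_pow_div_sub_le {u : ℝ} (hu : 0 ≤ u) (n : ℕ) :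
    |(⌊u * 2 ^ n⌋₊ : ℝ) / 2 ^ n - u| ≤ (1 / 2) ^ n := by
  have h2 : (0 : ℝ) < 2 ^ n := by positivity
  have hle := Nat.floor_le (mul_nonneg hu h2.le)
  have hlt := Nat.lt_floor_add_one (u * 2 ^ n)
  rw [show (⌊u * 2 ^ n⌋₊ : ℝ) / 2 ^ n - u = (⌊u * 2 ^ n⌋₊ - u * 2 ^ n) / 2 ^ n by field_simp,
    abs_div, abs_of_pos h2, one_div_pow, div_le_div_iff_of_pos_right h2, abs_le]
  constructor <;> linarith

theorem tendsto_floor_mul_two_pow_div {u : ℝ} (hu : 0 ≤ u) :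
    Tendsto (fun n : ℕ => (⌊u * 2 ^ n⌋₊ : ℝ) / 2 ^ n) atTop (𝓝 u) := by
  have h := squeeze_zero_norm
    (fun n => (Real.norm_eq_abs _).le.trans (abs_floor_mul_two_pow_div_sub_le hu n))
    (tendsto_pow_atTop_nhds_zero_of_lt_one (by norm_num) (by norm_num))
  simpa using h.add_const u

theorem floor_mul_two_pow_le {u : ℝ} (hu : u ≤ 1) (n : ℕ) : ⌊u * 2 ^ n⌋₊ ≤ 2 ^ n :=
  Nat.floor_le_of_le (by push_cast; nlinarith [pow_pos (two_pos (α := ℝ)) n])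

theorem floor_mul_two_pow_div_mem_Icc {u : ℝ} (hu : u ∈ Icc (0 : ℝ) 1) (n : ℕ) :
    (⌊u * 2 ^ n⌋₊ : ℝ) / 2 ^ n ∈ Icc (0 : ℝ) 1 := by
  have h2 : (0 : ℝ) < 2 ^ n := by positivity
  refine ⟨by positivity, (div_le_one h2).2 ?_⟩
  exact_mod_cast floor_mul_two_pow_le hu.2 n

theorem exists_dist_eq_mul_abs_sub {X : Type*} [MetricSpace X] [CompleteSpace X]
    (hmid : ∀ a b : X, ∃ m, dist a m = dist a b / 2 ∧ dist m b = dist a b / 2) (x y : X) :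
    ∃ g : ℝ → X, ∀ s ∈ Icc (0 : ℝ) 1, ∀ t ∈ Icc (0 : ℝ) 1,
      dist (g s) (g t) = dist x y * |s - t| := by
  have : Nonempty X := ⟨x⟩
  choose mid hmid using hmid
  set q : ℝ → ℕ → ℝ := fun u n => (⌊u * 2 ^ n⌋₊ : ℝ) / 2 ^ n
  set P : ℝ → ℕ → X := fun u n => dyadicChain mid x y n ⌊u * 2 ^ n⌋₊
  have hP : ∀ s ∈ Icc (0 : ℝ) 1, ∀ t ∈ Icc (0 : ℝ) 1, ∀ n n',
      dist (P s n) (P t n') = dist x y * |q s n - q t n'| := fun s hs t ht n n' =>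
    dist_dyadicChain x y (fun a b => hmid a b) (floor_mul_two_pow_le hs.2 n)
      (floor_mul_two_pow_le ht.2 n')
  have hlim : ∀ u ∈ Icc (0 : ℝ) 1, Tendsto (P u) atTop (𝓝 (limUnder atTop (P u))) := by
    intro u hu
    refine tendsto_nhds_limUnder (cauchySeq_tendsto_of_complete ?_)
    have hq := (tendsto_floor_mul_two_pow_div hu.1).cauchySeq
    rw [cauchySeq_iff_tendsto_dist_atTop_0] at hq ⊢
    simpa [hP u hu u hu, Real.dist_eq] using hq.const_mul (dist x y)
  refine ⟨fun u => limUnder atTop (P u), fun s hs t ht => ?_⟩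
  refine tendsto_nhds_unique ((hlim s hs).dist (hlim t ht)) ?_
  simp_rw [hP s hs t ht]
  exact (((tendsto_floor_mul_two_pow_div hs.1).sub
    (tendsto_floor_mul_two_pow_div ht.1)).abs).const_mul _

theorem exists_dist_eq_mul_abs_sub_of_lt {X : Type*} [MetricSpace X] [CompleteSpace X]
    (hmid : ∀ a b : X, ∃ m, dist a m = dist a b / 2 ∧ dist m b = dist a b / 2) (x y : X)
    {a b : ℝ} (hab : a < b) :
    ∃ g : ℝ → X, ∀ s ∈ Icc a b, ∀ t ∈ Icc a b,
      dist (g s) (g t) = dist x y / (b - a) * |s - t| := by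
  obtain ⟨g, hg⟩ := exists_dist_eq_mul_abs_sub hmid x y
  have hba : 0 < b - a := sub_pos.2 hab
  have hmem : ∀ s ∈ Icc a b, (s - a) / (b - a) ∈ Icc (0 : ℝ) 1 := fun s hs =>
    ⟨div_nonneg (by linarith [hs.1]) hba.le, (div_le_one hba).2 (by linarith [hs.2])⟩
  refine ⟨fun s => g ((s - a) / (b - a)), fun s hs t ht => ?_⟩
  rw [hg _ (hmem s hs) _ (hmem t ht), ← sub_div, sub_sub_sub_cancel_right, abs_div,
    abs_of_pos hba]
  ring

theorem nonpos_of_midpoint_le {L : ℝ → ℝ} (hc : ContinuousOn L (Icc 0 1))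
    (hmid : ∀ s ∈ Icc (0 : ℝ) 1, ∀ t ∈ Icc (0 : ℝ) 1, L ((s + t) / 2) ≤ (L s + L t) / 2)
    (h0 : L 0 ≤ 0) (h1 : L 1 ≤ 0) {t : ℝ} (ht : t ∈ Icc (0 : ℝ) 1) : L t ≤ 0 := by
  have dyadic : ∀ n k : ℕ, k ≤ 2 ^ n → L (k / 2 ^ n) ≤ 0 := by
    intro n
    induction n with
    | zero =>
      intro k hk
      interval_cases k <;> simpa
    | succ n ih =>
      have mem : ∀ j : ℕ, j ≤ 2 ^ n → (j : ℝ) / 2 ^ n ∈ Icc (0 : ℝ) 1 := fun j hj =>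
        ⟨by positivity, (div_le_one (by positivity)).2 (by exact_mod_cast hj)⟩
      intro k hk
      obtain ⟨j, rfl | rfl⟩ := Nat.even_or_odd' k
      · rw [show ((2 * j : ℕ) : ℝ) / 2 ^ (n + 1) = j / 2 ^ n by push_cast; field_simp; ring]
        exact ih j (by rw [pow_succ] at hk; omega)
      · have hj : j + 1 ≤ 2 ^ n := by rw [pow_succ] at hk; omega
        have e : ((2 * j + 1 : ℕ) : ℝ) / 2 ^ (n + 1) =
            (j / 2 ^ n + ((j + 1 : ℕ) : ℝ) / 2 ^ n) / 2 := by
          push_cast; field_simp; ring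
        rw [e]
        linarith [hmid _ (mem j (by omega)) _ (mem (j + 1) hj), ih j (by omega), ih (j + 1) hj]
  have happrox : Tendsto (fun n : ℕ => (⌊t * 2 ^ n⌋₊ : ℝ) / 2 ^ n) atTop (𝓝[Icc 0 1] t) :=
    tendsto_nhdsWithin_iff.2 ⟨tendsto_floor_mul_two_pow_div ht.1,
      Eventually.of_forall (floor_mul_two_pow_div_mem_Icc ht)⟩
  exact le_of_tendsto' ((hc t ht).tendsto.comp happrox)
    fun n => dyadic n _ (floor_mul_two_pow_le ht.2 n)

theorem convexOn_of_midpoint_le {f : ℝ → ℝ} {s : Set ℝ} (hs : Convex ℝ s) (hc : ContinuousOn f s)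
    (hmid : ∀ x ∈ s, ∀ y ∈ s, f ((x + y) / 2) ≤ (f x + f y) / 2) : ConvexOn ℝ s f := by
  refine ⟨hs, fun x hx y hy a b ha hb hab => ?_⟩
  have hseg : ∀ t ∈ Icc (0 : ℝ) 1, x + t * (y - x) ∈ s := fun t ht => hs.add_smul_sub_mem hx hy ht
  set L : ℝ → ℝ := fun t => f (x + t * (y - x)) - ((1 - t) * f x + t * f y)
  have hL : ContinuousOn L (Icc 0 1) :=
    (hc.comp (by fun_prop) hseg).sub (by fun_prop)
  have hLmid : ∀ u ∈ Icc (0 : ℝ) 1, ∀ v ∈ Icc (0 : ℝ) 1,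
      L ((u + v) / 2) ≤ (L u + L v) / 2 := by
    intro u hu v hv
    have h := hmid _ (hseg u hu) _ (hseg v hv)
    rw [show (x + u * (y - x) + (x + v * (y - x))) / 2 = x + (u + v) / 2 * (y - x) by ring] at h
    simp only [L]
    linarith
  have key := nonpos_of_midpoint_le hL hLmid (by simp [L]) (by simp [L]) ⟨hb, by linarith⟩
  simp only [L, smul_eq_mul] at key ⊢
  obtain rfl : a = 1 - b := by linarith
  rw [show (1 - b) * x + b * y = x + b * (y - x) by ring]
  linarith

theorem sum_mul_norm_sub_sum_smul_sq {E : Type*} [NormedAddCommGroup E] [InnerProductSpace ℝ E]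
    {ι : Type*} [Fintype ι] {w : ι → ℝ} (hw : ∑ i, w i = 1) (W : ι → E) :
    ∑ i, w i * ‖W i - ∑ j, w j • W j‖ ^ 2 = ∑ i, w i * ‖W i‖ ^ 2 - ‖∑ j, w j • W j‖ ^ 2 := by
  set B := ∑ j, w j • W j
  have hinner : ∑ i, w i * inner ℝ (W i) B = ‖B‖ ^ 2 := by
    simp only [← real_inner_smul_left, ← sum_inner, B, real_inner_self_eq_norm_sq]
  simp_rw [norm_sub_sq_real, mul_add, mul_sub, Finset.sum_add_distrib, Finset.sum_sub_distrib,
    ← Finset.sum_mul, hw, mul_left_comm _ (2 : ℝ), ← Finset.mul_sum, hinner]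
  ring

theorem sum_mul_sub_sum_mul_sq {ι : Type*} [Fintype ι] {w : ι → ℝ} (hw : ∑ i, w i = 1)
    (f : ι → ℝ) :
    ∑ i, w i * (f i - ∑ j, w j * f j) ^ 2 = ∑ i, w i * f i ^ 2 - (∑ j, w j * f j) ^ 2 := by
  simpa [Real.norm_eq_abs, sq_abs] using sum_mul_norm_sub_sum_smul_sq hw f

theorem norm_sum_smul_sq_le {E : Type*} [NormedAddCommGroup E] [InnerProductSpace ℝ E]
    {ι : Type*} [Fintype ι] {t : ι → ℝ} (ht0 : ∀ i, 0 ≤ t i) (ht1 : ∑ i, t i = 1) (w : ι → E) :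
    ‖∑ i, t i • w i‖ ^ 2 ≤ ∑ i, t i * ‖w i‖ ^ 2 := by
  have := sum_mul_norm_sub_sum_smul_sq ht1 w
  have : 0 ≤ ∑ i, t i * ‖w i - ∑ j, t j • w j‖ ^ 2 :=
    Finset.sum_nonneg fun i _ => mul_nonneg (ht0 i) (sq_nonneg _)
  linarith

theorem isWBarycenter_comp {T : Type*} [MetricSpace T] [HadamardSpace T] {g : ℝ → T} {c : ℝ}
    {s : Set ℝ} (hs : Convex ℝ s) (hg : ∀ u ∈ s, ∀ v ∈ s, dist (g u) (g v) = c * |u - v|)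
    {ι : Type*} [Fintype ι] {w : ι → ℝ} (hw0 : ∀ i, 0 ≤ w i) (hw1 : ∑ i, w i = 1)
    {f : ι → ℝ} (hf : ∀ i, f i ∈ s) :
    IsWBarycenter (g (∑ i, w i * f i)) (fun i => g (f i)) w := by
  intro q
  set F : ℝ → ℝ := fun u => dist q (g u) ^ 2 - c ^ 2 * u ^ 2
  have hgc : ContinuousOn g s := by
    refine (LipschitzOnWith.of_dist_le_mul (K := ‖c‖₊) fun u hu v hv => ?_).continuousOn
    rw [hg u hu v hv, coe_nnnorm, Real.norm_eq_abs, Real.dist_eq]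
    exact mul_le_mul_of_nonneg_right (le_abs_self c) (abs_nonneg _)
  -- the CN inequality at the midpoint of `g u` and `g v` is exactly midpoint convexity of `F`
  have hFmid : ∀ u ∈ s, ∀ v ∈ s, F ((u + v) / 2) ≤ (F u + F v) / 2 := by
    intro u hu v hv
    have hm : (u + v) / 2 ∈ s := by
      convert hs hu hv (by norm_num : (0 : ℝ) ≤ 1 / 2) (by norm_num : (0 : ℝ) ≤ 1 / 2)
        (by norm_num) using 1
      simp only [smul_eq_mul]
      ring
    have cn := HadamardSpace.cn q (g u) (g v) (g ((u + v) / 2))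
      (by rw [hg u hu _ hm, hg u hu v hv, show u - (u + v) / 2 = (u - v) / 2 by ring, abs_div,
        abs_two]; ring)
      (by rw [hg _ hm v hv, hg u hu v hv, show (u + v) / 2 - v = (u - v) / 2 by ring, abs_div,
        abs_two]; ring)
    rw [hg u hu v hv, mul_pow, sq_abs] at cn
    simp only [F]
    nlinarith [cn]
  have hFc : ContinuousOn F s :=
    (((continuous_const.dist continuous_id).comp_continuousOn hgc).pow 2).sub (by fun_prop)
  have hjensen := (convexOn_of_midpoint_le hs hFc hFmid).map_sum_le (t := Finset.univ)
    (fun i _ => hw0 i) hw1 (fun i _ => hf i)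
  simp only [F, smul_eq_mul, mul_sub, Finset.sum_sub_distrib, mul_left_comm _ (c ^ 2),
    ← Finset.mul_sum] at hjensen
  have hmean := hs.sum_mem (t := Finset.univ) (fun i _ => hw0 i) hw1 (fun i _ => hf i)
  simp only [smul_eq_mul] at hmean
  calc ∑ i, w i * dist (g (f i)) (g (∑ j, w j * f j)) ^ 2
      = c ^ 2 * (∑ i, w i * f i ^ 2 - (∑ j, w j * f j) ^ 2) := by
        rw [← sum_mul_sub_sum_mul_sq hw1, Finset.mul_sum]
        refine Finset.sum_congr rfl fun i _ => ?_
        rw [hg _ (hf i) _ hmean, mul_pow, sq_abs]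
        ring
    _ ≤ ∑ i, w i * dist (g (f i)) q ^ 2 := by
        simp only [dist_comm (g _) q]
        nlinarith [sq_nonneg (dist q (g (∑ j, w j * f j)))]

theorem exists_injective_comp_eq {V α : Type*} [Finite V] (φ : V → α) :
    ∃ (m : ℕ) (v : Fin m → α) (idx : V → Fin m),
      Function.Injective v ∧ Function.Surjective idx ∧ ∀ y, v (idx y) = φ y := by
  classical
  have : Fintype (Set.range φ) := Fintype.ofFinite _
  let e := Fintype.equivFin (Set.range φ)
  exact ⟨_, fun i => e.symm i, fun y => e (Set.rangeFactorization φ y),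
    Subtype.val_injective.comp e.symm.injective,
    e.surjective.comp Set.rangeFactorization_surjective, fun y => by simp [Set.rangeFactorization]⟩

theorem sum_smul_comp_eq_sum_fiber {V ι M : Type*} [Fintype V] [Fintype ι] [DecidableEq ι]
    [AddCommMonoid M] [Module ℝ M] (idx : V → ι) (t : V → ℝ) (F : ι → M) :
    ∑ y, t y • F (idx y) = ∑ i, (∑ y with idx y = i, t y) • F i := by
  rw [← Finset.sum_fiberwise Finset.univ idx]
  refine Finset.sum_congr rfl fun i _ => ?_
  rw [Finset.sum_smul]
  exact Finset.sum_congr rfl fun y hy => by rw [(Finset.mem_filter.1 hy).2]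

section Delta

variable {T : Type*} [MetricSpace T]

def realizationQuotients {m : ℕ} (b : T) (v : Fin m → T) (t : Fin m → ℝ) : Set ℝ :=
  {r : ℝ | ∃ (N : ℕ) (w : Fin m → EuclideanSpace ℝ (Fin N)),
    IsRealization b v w ∧ r = ‖∑ i, t i • w i‖ ^ 2 / ∑ i, t i * ‖w i‖ ^ 2}

theorem isRealization_single {ι : Type*} (b : T) (v : ι → T) :
    IsRealization b v fun i => EuclideanSpace.single (0 : Fin 1) (dist b (v i)) := by
  refine ⟨fun i => by simp, fun i j => ?_⟩
  rw [← dist_eq_norm, PiLp.dist_single_same, Real.dist_eq, dist_comm b, dist_comm b]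
  exact abs_dist_sub_le _ _ b

theorem deltaConfig_le_one {m : ℕ} (b : T) (v : Fin m → T) {t : Fin m → ℝ} (ht0 : ∀ i, 0 ≤ t i)
    (ht1 : ∑ i, t i = 1) : deltaConfig b v t ≤ 1 := by
  refine csInf_le_of_le ⟨0, ?_⟩ ⟨1, _, isRealization_single b v, rfl⟩ ?_
  · rintro r ⟨N, w, -, rfl⟩
    exact div_nonneg (sq_nonneg _) (Finset.sum_nonneg fun i _ => mul_nonneg (ht0 i) (sq_nonneg _))
  · exact div_le_one_of_le₀ (norm_sum_smul_sq_le ht0 ht1 _)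
      (Finset.sum_nonneg fun i _ => mul_nonneg (ht0 i) (sq_nonneg _))

theorem deltaConfig_le_deltaTotal {m : ℕ} {b : T} {v : Fin m → T} {t : Fin m → ℝ}
    (hv : Function.Injective v) (ht0 : ∀ i, 0 < t i) (ht1 : ∑ i, t i = 1)
    (hb : IsWBarycenter b v t) : deltaConfig b v t ≤ deltaTotal T := by
  refine le_csSup ⟨1, ?_⟩ ⟨m, v, t, b, hv, ht0, ht1, hb, rfl⟩
  rintro r ⟨m, v, t, b, -, ht0, ht1, -, rfl⟩
  exact deltaConfig_le_one b v (fun i => (ht0 i).le) ht1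

theorem exists_realization_le_deltaConfig_add {m : ℕ} (b : T) (v : Fin m → T) {t : Fin m → ℝ}
    (ht0 : ∀ i, 0 ≤ t i) (ht1 : ∑ i, t i = 1) {ε : ℝ} (hε : 0 < ε) :
    ∃ (N : ℕ) (w : Fin m → EuclideanSpace ℝ (Fin N)), IsRealization b v w ∧
      ‖∑ i, t i • w i‖ ^ 2 ≤ (deltaConfig b v t + ε) * ∑ i, t i * ‖w i‖ ^ 2 := by
  obtain ⟨_, ⟨N, w, hw, rfl⟩, hlt⟩ := Real.lt_sInf_add_pos (s := realizationQuotients b v t)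
    ⟨_, 1, _, isRealization_single b v, rfl⟩ hε
  refine ⟨N, w, hw, ?_⟩
  rcases (Finset.sum_nonneg fun i _ => mul_nonneg (ht0 i) (sq_nonneg ‖w i‖)).eq_or_lt with h | h
  · rw [← h, mul_zero, h]
    exact norm_sum_smul_sq_le ht0 ht1 w
  · exact ((div_lt_iff₀ h).1 hlt).le

theorem exists_realization_le_deltaTotal_add {V : Type*} [Fintype V] {φ : V → T} {t : V → ℝ}
    (ht0 : ∀ y, 0 < t y) (ht1 : ∑ y, t y = 1) {b : T} (hb : IsWBarycenter b φ t)
    {ε : ℝ} (hε : 0 < ε) :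
    ∃ (N : ℕ) (W : V → EuclideanSpace ℝ (Fin N)), IsRealization b φ W ∧
      ‖∑ y, t y • W y‖ ^ 2 ≤ (deltaTotal T + ε) * ∑ y, t y * ‖W y‖ ^ 2 := by
  classical
  obtain ⟨m, v, idx, hv, hidx, hφ⟩ := exists_injective_comp_eq φ
  set s : Fin m → ℝ := fun i => ∑ y with idx y = i, t y
  have regroup : ∀ F : Fin m → ℝ, ∑ y, t y * F (idx y) = ∑ i, s i * F i :=
    sum_smul_comp_eq_sum_fiber idx t
  have hs0 : ∀ i, 0 < s i := fun i =>
    let ⟨y, hy⟩ := hidx i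
    Finset.sum_pos (fun y _ => ht0 y) ⟨y, by simp [hy]⟩
  have hs1 : ∑ i, s i = 1 := by simpa [ht1] using (regroup fun _ => 1).symm
  have hsb : IsWBarycenter b v s := fun q => by
    simpa only [← regroup, hφ] using hb q
  obtain ⟨N, w, ⟨hnorm, hlip⟩, hw⟩ :=
    exists_realization_le_deltaConfig_add b v (fun i => (hs0 i).le) hs1 hε
  refine ⟨N, fun y => w (idx y), ⟨fun y => by rw [hnorm, hφ], fun y y' => by
    simpa only [hφ] using hlip (idx y) (idx y')⟩, ?_⟩
  rw [sum_smul_comp_eq_sum_fiber idx t w, regroup fun i => ‖w i‖ ^ 2]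
  calc ‖∑ i, s i • w i‖ ^ 2 ≤ (deltaConfig b v s + ε) * ∑ i, s i * ‖w i‖ ^ 2 := hw
    _ ≤ (deltaTotal T + ε) * ∑ i, s i * ‖w i‖ ^ 2 := by
      gcongr
      · exact Finset.sum_nonneg fun i _ => mul_nonneg (hs0 i).le (sq_nonneg _)
      · exact deltaConfig_le_deltaTotal hv hs0 hs1 hsb

end Delta

section Graph

variable {V : Type*} [Fintype V]

-- The sets of Rayleigh quotients whose infima are `mu1Graph` and `lambda1Graph`.
def mu1Quotients (m1 : V → ℝ) (m2 : V → V → ℝ) : Set ℝ :=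
  {r : ℝ | ∃ f : V → ℝ, (∃ y y', f y ≠ f y') ∧
    r = ((1 : ℝ) / 2 * ∑ y, ∑ y', m2 y y' * (f y - f y') ^ 2) /
        (∑ y, m1 y * (f y - ∑ y', (m1 y' / ∑ y'', m1 y'') * f y') ^ 2)}

def lambda1Quotients (m1 : V → ℝ) (m2 : V → V → ℝ) (T : Type*) [MetricSpace T] : Set ℝ :=
  {r : ℝ | ∃ φ : V → T, (∃ y y', φ y ≠ φ y') ∧ ∃ b : T,
    IsWBarycenter b φ (fun y => m1 y / ∑ y', m1 y') ∧
    r = ((1 : ℝ) / 2 * ∑ y, ∑ y', m2 y y' * dist (φ y) (φ y') ^ 2) /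
        (∑ y, m1 y * dist b (φ y) ^ 2)}

variable {m1 : V → ℝ} {m2 : V → V → ℝ}

theorem nonneg_of_mem_mu1Quotients (hnn : ∀ y y', 0 ≤ m2 y y') (hm1 : ∀ y, 0 ≤ m1 y) {r : ℝ}
    (hr : r ∈ mu1Quotients m1 m2) : 0 ≤ r := by
  obtain ⟨f, -, rfl⟩ := hr
  exact div_nonneg (mul_nonneg (by norm_num) (Finset.sum_nonneg fun y _ => Finset.sum_nonneg
    fun y' _ => mul_nonneg (hnn y y') (sq_nonneg _)))
    (Finset.sum_nonneg fun y _ => mul_nonneg (hm1 y) (sq_nonneg _))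

theorem nonneg_of_mem_lambda1Quotients (hnn : ∀ y y', 0 ≤ m2 y y') (hm1 : ∀ y, 0 ≤ m1 y)
    {T : Type*} [MetricSpace T] {r : ℝ} (hr : r ∈ lambda1Quotients m1 m2 T) : 0 ≤ r := by
  obtain ⟨φ, -, b, -, rfl⟩ := hr
  exact div_nonneg (mul_nonneg (by norm_num) (Finset.sum_nonneg fun y _ => Finset.sum_nonneg
    fun y' _ => mul_nonneg (hnn y y') (sq_nonneg _)))
    (Finset.sum_nonneg fun y _ => mul_nonneg (hm1 y) (sq_nonneg _))

theorem mu1Graph_nonneg (hnn : ∀ y y', 0 ≤ m2 y y') (hm1 : ∀ y, 0 ≤ m1 y) :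
    0 ≤ mu1Graph m1 m2 :=
  Real.sInf_nonneg fun _ => nonneg_of_mem_mu1Quotients hnn hm1

theorem mu1Graph_mul_sum_sq_le (hnn : ∀ y y', 0 ≤ m2 y y') (hpos : ∀ y, 0 < m1 y) (f : V → ℝ) :
    mu1Graph m1 m2 * ∑ y, m1 y * (f y - ∑ y', (m1 y' / ∑ y'', m1 y'') * f y') ^ 2 ≤
      (1 : ℝ) / 2 * ∑ y, ∑ y', m2 y y' * (f y - f y') ^ 2 := by
  have henergy : 0 ≤ (1 : ℝ) / 2 * ∑ y, ∑ y', m2 y y' * (f y - f y') ^ 2 :=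
    mul_nonneg (by norm_num) (Finset.sum_nonneg fun y _ => Finset.sum_nonneg
      fun y' _ => mul_nonneg (hnn y y') (sq_nonneg _))
  by_cases hf : ∃ y y', f y ≠ f y'
  · have hden : 0 < ∑ y, m1 y * (f y - ∑ y', (m1 y' / ∑ y'', m1 y'') * f y') ^ 2 := by
      refine (Finset.sum_nonneg fun y _ => mul_nonneg (hpos y).le (sq_nonneg _)).lt_of_ne
        fun h => ?_
      have hmean := (Finset.sum_eq_zero_iff_of_nonneg
        fun y _ => mul_nonneg (hpos y).le (sq_nonneg _)).1 h.symm
      simp only [Finset.mem_univ, mul_eq_zero, (hpos _).ne', false_or, pow_eq_zero_iff two_ne_zero,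
        sub_eq_zero, forall_const] at hmean
      obtain ⟨y, y', hne⟩ := hf
      exact hne ((hmean y).trans (hmean y').symm)
    rw [← le_div_iff₀ hden]
    exact csInf_le ⟨0, fun _ => nonneg_of_mem_mu1Quotients hnn fun y => (hpos y).le⟩ ⟨f, hf, rfl⟩
  · push Not at hf
    convert (mul_zero (mu1Graph m1 m2)).trans_le henergy using 2
    refine Finset.sum_eq_zero fun y _ => ?_
    have hM : 0 < ∑ y'', m1 y'' := Finset.sum_pos (fun y _ => hpos y) ⟨y, Finset.mem_univ _⟩
    simp_rw [hf _ y, ← Finset.sum_mul, ← Finset.sum_div, div_self hM.ne', one_mul, sub_self]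
    ring

theorem mu1Graph_mul_sum_norm_sq_le (hnn : ∀ y y', 0 ≤ m2 y y') (hpos : ∀ y, 0 < m1 y)
    {ι : Type*} [Fintype ι] (W : V → EuclideanSpace ℝ ι) :
    mu1Graph m1 m2 * ∑ y, m1 y * ‖W y - ∑ y', (m1 y' / ∑ y'', m1 y'') • W y'‖ ^ 2 ≤
      (1 : ℝ) / 2 * ∑ y, ∑ y', m2 y y' * ‖W y - W y'‖ ^ 2 := by
  have hL : ∑ y, m1 y * ‖W y - ∑ y', (m1 y' / ∑ y'', m1 y'') • W y'‖ ^ 2 =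
      ∑ k, ∑ y, m1 y * ((W y).ofLp k - ∑ y', (m1 y' / ∑ y'', m1 y'') * (W y').ofLp k) ^ 2 := by
    simp only [EuclideanSpace.norm_sq_eq, WithLp.ofLp_sub, WithLp.ofLp_sum, WithLp.ofLp_smul,
      Pi.sub_apply, Finset.sum_apply, Pi.smul_apply, smul_eq_mul, Real.norm_eq_abs, sq_abs,
      Finset.mul_sum]
    exact Finset.sum_comm
  have hR : ∑ y, ∑ y', m2 y y' * ‖W y - W y'‖ ^ 2 =
      ∑ k, ∑ y, ∑ y', m2 y y' * ((W y).ofLp k - (W y').ofLp k) ^ 2 := by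
    simp only [EuclideanSpace.norm_sq_eq, WithLp.ofLp_sub, Pi.sub_apply, Real.norm_eq_abs, sq_abs,
      Finset.mul_sum]
    exact (Finset.sum_congr rfl fun y _ => Finset.sum_comm).trans Finset.sum_comm
  rw [hL, hR, Finset.mul_sum, Finset.mul_sum]
  exact Finset.sum_le_sum fun k _ => mu1Graph_mul_sum_sq_le hnn hpos _

theorem one_sub_deltaTotal_sub_mul_mu1Graph_mul_le [Nonempty V] (hnn : ∀ y y', 0 ≤ m2 y y')
    (hpos : ∀ y, 0 < m1 y) {T : Type*} [MetricSpace T] {φ : V → T} {b : T}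
    (hb : IsWBarycenter b φ fun y => m1 y / ∑ y', m1 y') {ε : ℝ} (hε : 0 < ε) :
    (1 - deltaTotal T - ε) * mu1Graph m1 m2 * ∑ y, m1 y * dist b (φ y) ^ 2 ≤
      (1 : ℝ) / 2 * ∑ y, ∑ y', m2 y y' * dist (φ y) (φ y') ^ 2 := by
  set M := ∑ y, m1 y
  have hM : 0 < M := Finset.sum_pos (fun y _ => hpos y) Finset.univ_nonempty
  have ht1 : ∑ y, m1 y / M = 1 := by rw [← Finset.sum_div, div_self hM.ne']
  obtain ⟨N, W, ⟨hnorm, hlip⟩, hW⟩ :=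
    exists_realization_le_deltaTotal_add (fun y => div_pos (hpos y) hM) ht1 hb hε
  set B := ∑ y, (m1 y / M) • W y
  set D := ∑ y, m1 y / M * ‖W y‖ ^ 2
  have hden : ∑ y, m1 y * dist b (φ y) ^ 2 = M * D := by
    simp only [D, Finset.mul_sum, hnorm]
    exact Finset.sum_congr rfl fun y _ => by field_simp
  have hvar : ∑ y, m1 y * ‖W y - B‖ ^ 2 = M * (D - ‖B‖ ^ 2) := by
    rw [← sum_mul_norm_sub_sum_smul_sq ht1, Finset.mul_sum]
    exact Finset.sum_congr rfl fun y _ => by simp only [B]; field_simp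
  have henergy : (1 : ℝ) / 2 * ∑ y, ∑ y', m2 y y' * ‖W y - W y'‖ ^ 2 ≤
      (1 : ℝ) / 2 * ∑ y, ∑ y', m2 y y' * dist (φ y) (φ y') ^ 2 := by
    gcongr with y _ y' _
    · exact hnn y y'
    · exact hlip y y'
  have hμ := mu1Graph_nonneg hnn fun y => (hpos y).le
  calc (1 - deltaTotal T - ε) * mu1Graph m1 m2 * ∑ y, m1 y * dist b (φ y) ^ 2
      = mu1Graph m1 m2 * (M * (D - (deltaTotal T + ε) * D)) := by rw [hden]; ring
    _ ≤ mu1Graph m1 m2 * (M * (D - ‖B‖ ^ 2)) := by gcongr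
    _ = mu1Graph m1 m2 * ∑ y, m1 y * ‖W y - B‖ ^ 2 := by rw [hvar]
    _ ≤ (1 : ℝ) / 2 * ∑ y, ∑ y', m2 y y' * ‖W y - W y'‖ ^ 2 :=
      mu1Graph_mul_sum_norm_sq_le hnn hpos W
    _ ≤ _ := henergy

theorem one_sub_deltaTotal_mul_mu1Graph_le (hnn : ∀ y y', 0 ≤ m2 y y') (hpos : ∀ y, 0 < m1 y)
    {T : Type*} [MetricSpace T] {φ : V → T} (hφ : ∃ y y', φ y ≠ φ y') {b : T}
    (hb : IsWBarycenter b φ fun y => m1 y / ∑ y', m1 y') :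
    (1 - deltaTotal T) * mu1Graph m1 m2 ≤
      ((1 : ℝ) / 2 * ∑ y, ∑ y', m2 y y' * dist (φ y) (φ y') ^ 2) /
        ∑ y, m1 y * dist b (φ y) ^ 2 := by
  obtain ⟨y, y', hne⟩ := hφ
  have : Nonempty V := ⟨y⟩
  have hden : 0 < ∑ y, m1 y * dist b (φ y) ^ 2 := by
    obtain ⟨z, hz⟩ : ∃ z, b ≠ φ z := by
      by_contra! h
      exact hne ((h y).symm.trans (h y'))
    exact Finset.sum_pos' (fun y _ => mul_nonneg (hpos y).le (sq_nonneg _))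
      ⟨z, Finset.mem_univ _, mul_pos (hpos z) (pow_pos (dist_pos.2 hz) 2)⟩
  rw [le_div_iff₀ hden]
  have hlim : Tendsto (fun ε => (1 - deltaTotal T - ε) * mu1Graph m1 m2 *
      ∑ y, m1 y * dist b (φ y) ^ 2) (𝓝[>] 0)
      (𝓝 ((1 - deltaTotal T) * mu1Graph m1 m2 * ∑ y, m1 y * dist b (φ y) ^ 2)) :=
    tendsto_nhdsWithin_of_tendsto_nhds (Continuous.tendsto' (by fun_prop) _ _ (by simp))
  exact le_of_tendsto hlim (eventually_nhdsWithin_of_forall fun ε hε =>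
    one_sub_deltaTotal_sub_mul_mu1Graph_mul_le hnn hpos hb hε)

theorem mu1Quotients_subset_lambda1Quotients (hpos : ∀ y, 0 < m1 y) {T : Type*} [MetricSpace T]
    [HadamardSpace T] (hT : ∃ x y : T, x ≠ y) : mu1Quotients m1 m2 ⊆ lambda1Quotients m1 m2 T := by
  rintro _ ⟨f, ⟨y₀, y₁, hf⟩, rfl⟩
  obtain ⟨x, x', hx⟩ := hT
  have : CompleteSpace T := HadamardSpace.complete
  set R := ∑ y, |f y| + 1
  have hfR : ∀ y, f y ∈ Icc (-R) R := fun y =>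
    abs_le.1 (by linarith [Finset.single_le_sum (fun y _ => abs_nonneg (f y)) (Finset.mem_univ y)])
  have hR : -R < R := by
    linarith [Finset.sum_nonneg fun y (_ : y ∈ Finset.univ) => abs_nonneg (f y)]
  obtain ⟨g, hg⟩ := exists_dist_eq_mul_abs_sub_of_lt HadamardSpace.midpoints x x' hR
  set c := dist x x' / (R - -R)
  have hc : 0 < c := div_pos (dist_pos.2 hx) (sub_pos.2 hR)
  have hM : 0 < ∑ y, m1 y := Finset.sum_pos (fun y _ => hpos y) ⟨y₀, Finset.mem_univ _⟩
  have hbary := isWBarycenter_comp (convex_Icc (-R) R) hg (fun y => div_nonneg (hpos y).le hM.le)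
    (by rw [← Finset.sum_div, div_self hM.ne']) hfR
  set fbar := ∑ y', (m1 y' / ∑ y'', m1 y'') * f y'
  have hfbar : fbar ∈ Icc (-R) R := by
    simpa only [smul_eq_mul] using (convex_Icc _ _).sum_mem
      (fun y _ => div_nonneg (hpos y).le hM.le) (by rw [← Finset.sum_div, div_self hM.ne'])
      fun y _ => hfR y
  refine ⟨fun y => g (f y), ⟨y₀, y₁, fun h => hf ?_⟩, g fbar, hbary, ?_⟩
  · have := hg _ (hfR y₀) _ (hfR y₁)
    rw [show g (f y₀) = g (f y₁) from h, dist_self, eq_comm, mul_eq_zero, abs_eq_zero,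
      sub_eq_zero] at this
    exact this.resolve_left hc.ne'
  have hφ : ∀ y y', dist (g (f y)) (g (f y')) ^ 2 = c ^ 2 * (f y - f y') ^ 2 := fun y y' => by
    rw [hg _ (hfR y) _ (hfR y'), mul_pow, sq_abs]
  have hb : ∀ y, dist (g fbar) (g (f y)) ^ 2 = c ^ 2 * (f y - fbar) ^ 2 := fun y => by
    rw [hg _ hfbar _ (hfR y), mul_pow, sq_abs, ← neg_sub, neg_sq]
  simp only [hφ, hb, mul_left_comm _ (c ^ 2), ← Finset.mul_sum]
  rw [mul_div_mul_left _ _ (by positivity)]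

theorem mu1Quotients_eq_empty [Subsingleton V] (m1 : V → ℝ) (m2 : V → V → ℝ) :
    mu1Quotients m1 m2 = ∅ :=
  Set.eq_empty_of_forall_notMem fun _ ⟨_, ⟨y, y', hne⟩, _⟩ => hne (by rw [Subsingleton.elim y y'])

theorem lambda1Quotients_eq_empty [Subsingleton V] (m1 : V → ℝ) (m2 : V → V → ℝ) (T : Type*)
    [MetricSpace T] : lambda1Quotients m1 m2 T = ∅ :=
  Set.eq_empty_of_forall_notMem fun _ ⟨_, ⟨y, y', hne⟩, _⟩ => hne (by rw [Subsingleton.elim y y'])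

theorem mu1Quotients_nonempty [Nontrivial V] (m1 : V → ℝ) (m2 : V → V → ℝ) :
    (mu1Quotients m1 m2).Nonempty := by
  classical
  obtain ⟨y, y', hne⟩ := exists_pair_ne V
  exact ⟨_, fun z => if z = y then 1 else 0, ⟨y, y', by simp [hne.symm]⟩, rfl⟩

end Graph

theorem stmt11_general {V : Type*} [Fintype V] (m1 : V → ℝ) (m2 : V → V → ℝ)
    (hnn : ∀ y y', 0 ≤ m2 y y')
    (hpos : ∀ y, 0 < m1 y)
    (T : Type*) [MetricSpace T] [HadamardSpace T] (hT : ∃ x y : T, x ≠ y) :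
    (1 - deltaTotal T) * mu1Graph m1 m2 ≤ lambda1Graph m1 m2 T ∧
    lambda1Graph m1 m2 T ≤ mu1Graph m1 m2 ∧
    (deltaTotal T = 0 → lambda1Graph m1 m2 T = mu1Graph m1 m2) := by
  rcases subsingleton_or_nontrivial V with hV | hV
  · have hμ : mu1Graph m1 m2 = 0 :=
      (congrArg sInf (mu1Quotients_eq_empty m1 m2)).trans Real.sInf_empty
    have hlam : lambda1Graph m1 m2 T = 0 :=
      (congrArg sInf (lambda1Quotients_eq_empty m1 m2 T)).trans Real.sInf_empty
    simp [hμ, hlam]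
  have hsub := mu1Quotients_subset_lambda1Quotients (m2 := m2) hpos hT
  have upper : lambda1Graph m1 m2 T ≤ mu1Graph m1 m2 :=
    csInf_le_csInf ⟨0, fun _ => nonneg_of_mem_lambda1Quotients hnn fun y => (hpos y).le⟩
      (mu1Quotients_nonempty m1 m2) hsub
  have lower : (1 - deltaTotal T) * mu1Graph m1 m2 ≤ lambda1Graph m1 m2 T :=
    le_csInf ((mu1Quotients_nonempty m1 m2).mono hsub) fun _ ⟨_, hφ, _, hb, hr⟩ =>
      hr ▸ one_sub_deltaTotal_mul_mu1Graph_le hnn hpos hφ hb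
  exact ⟨lower, upper, fun h => upper.antisymm (by simpa [h] using lower)⟩

/-- Estimate of Wang's invariant:
`(1 − δ(T)) μ₁(L) ≤ λ₁(L,T) ≤ μ₁(L)`, with equality `λ₁ = μ₁` when `δ(T) = 0`. -/
theorem stmt11 {V : Type*} [Fintype V] (m1 : V → ℝ) (m2 : V → V → ℝ)
    (hsymm : ∀ y y', m2 y y' = m2 y' y) (hnn : ∀ y y', 0 ≤ m2 y y')
    (hdiag : ∀ y, m2 y y = 0)
    (hadm : ∀ y, m1 y = ∑ y', m2 y y') (hpos : ∀ y, 0 < m1 y)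
    (T : Type*) [MetricSpace T] [HadamardSpace T] (hT : ∃ x y : T, x ≠ y) :
    (1 - deltaTotal T) * mu1Graph m1 m2 ≤ lambda1Graph m1 m2 T ∧
    lambda1Graph m1 m2 T ≤ mu1Graph m1 m2 ∧
    (deltaTotal T = 0 → lambda1Graph m1 m2 T = mu1Graph m1 m2) :=
  stmt11_general m1 m2 hnn hpos T hT
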